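/- For each fixed ρ > 0, the function λ_d(ρ) = ∫_{arccosh(d)}^{ρ} d/√(cosh²u − d²) du tends to +∞ as d → 1⁺ (for d with 1 < d < cosh ρ). -/

import Mathlib

open MeasureTheory Set Real Filter Topology intervalIntegral

noncomputable def arccosh (x : ℝ) : ℝ := Real.log (x + Real.sqrt (x ^ 2 - 1))

/-
Write `d = cosh a`. Near `u = a` the radicand `cosh² u - cosh² a` grows at least linearly in
`u - a`, so the integrand is `O((u - a)^(-1/2))` and the integral is a genuine (finite) integral.
On the other hand `√(cosh² u - cosh² a) ≤ sinh u ≤ u cosh ρ`, so the integral is at least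
`(cosh ρ)⁻¹ log (ρ / a)`, which tends to `+∞` because `a = arccosh d → 0⁺` as `d → 1⁺`.
-/

lemma arccosh_eq_arcosh : arccosh = arcosh := rfl

lemma tendsto_arccosh_nhdsGT_one : Tendsto arccosh (𝓝[>] 1) (𝓝[>] 0) := by
  have hcont : ContinuousWithinAt arcosh (Ioi 1) 1 :=
    (continuousOn_arcosh 1 (mem_Ici.2 le_rfl)).mono Ioi_subset_Ici_self
  have := hcont.tendsto_nhdsWithin (t := Ioi 0) fun _ hx ↦ arcosh_pos hx
  rwa [arcosh_zero] at this

lemma sinh_le_mul_cosh {u : ℝ} (hu : 0 ≤ u) : sinh u ≤ u * cosh u := by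
  rcases hu.eq_or_lt with rfl | hu
  · simp
  obtain ⟨c, ⟨hc0, hcu⟩, hslope⟩ := exists_hasDerivAt_eq_slope sinh cosh hu
    continuous_sinh.continuousOn fun x _ ↦ hasDerivAt_sinh x
  have hcosh : cosh c ≤ cosh u :=
    cosh_le_cosh.2 (by rw [abs_of_pos hc0, abs_of_pos hu]; exact hcu.le)
  rw [sinh_zero, sub_zero, sub_zero, eq_div_iff hu.ne'] at hslope
  nlinarith

lemma cosh_add_sinh_mul_sub_le_cosh {a u : ℝ} (ha : 0 ≤ a) (hau : a ≤ u) :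
    cosh a + sinh a * (u - a) ≤ cosh u := by
  have hadd : cosh u = cosh a * cosh (u - a) + sinh a * sinh (u - a) := by
    rw [← cosh_add, add_sub_cancel]
  nlinarith [one_le_cosh (u - a), self_le_sinh_iff.2 (sub_nonneg.2 hau), sinh_nonneg_iff.2 ha,
    cosh_pos a]

lemma two_mul_sinh_mul_sub_le_cosh_sq_sub_cosh_sq {a u : ℝ} (ha : 0 ≤ a) (hau : a ≤ u) :
    2 * sinh a * (u - a) ≤ cosh u ^ 2 - cosh a ^ 2 := by
  have htangent := cosh_add_sinh_mul_sub_le_cosh ha hau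
  have hsinh : 0 ≤ sinh a * (u - a) := mul_nonneg (sinh_nonneg_iff.2 ha) (sub_nonneg.2 hau)
  nlinarith [one_le_cosh a]

lemma sqrt_cosh_sq_sub_cosh_sq_le {a u : ℝ} (hu : 0 ≤ u) :
    √(cosh u ^ 2 - cosh a ^ 2) ≤ u * cosh u := by
  have hsinh := sinh_le_mul_cosh hu
  rw [sqrt_le_iff]
  refine ⟨by positivity, ?_⟩
  nlinarith [cosh_sq u, one_le_cosh a, sinh_nonneg_iff.2 hu]

lemma intervalIntegrable_inv_sqrt_cosh_sq_sub_cosh_sq {a ρ : ℝ} (ha : 0 < a) (haρ : a ≤ ρ) :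
    IntervalIntegrable (fun u ↦ (√(cosh u ^ 2 - cosh a ^ 2))⁻¹) volume a ρ := by
  have hsinh : 0 < sinh a := sinh_pos_iff.2 ha
  have hmajorant : IntervalIntegrable
      (fun u ↦ (√(2 * sinh a))⁻¹ * (u - a) ^ (-(1 / 2) : ℝ)) volume a ρ := by
    simpa using ((intervalIntegrable_rpow' (a := 0) (b := ρ - a) (r := -(1 / 2))
      (by norm_num)).comp_sub_right a).const_mul (√(2 * sinh a))⁻¹
  refine hmajorant.mono_fun (by fun_prop) ?_
  rw [uIoc_of_le haρ]
  refine (ae_restrict_mem measurableSet_Ioc).mono fun u ⟨hau, _⟩ ↦ ?_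
  have hua : 0 < u - a := sub_pos.2 hau
  have hradicand : √(2 * sinh a) * √(u - a) ≤ √(cosh u ^ 2 - cosh a ^ 2) := by
    rw [← sqrt_mul (by positivity)]
    exact sqrt_le_sqrt (two_mul_sinh_mul_sub_le_cosh_sq_sub_cosh_sq ha.le hau.le)
  dsimp only
  rw [norm_inv, norm_of_nonneg (sqrt_nonneg _), norm_of_nonneg (by positivity),
    rpow_neg hua.le, ← sqrt_eq_rpow, ← mul_inv]
  exact inv_anti₀ (by positivity) hradicand

lemma inv_cosh_mul_log_le_integral {a ρ : ℝ} (ha : 0 < a) (haρ : a ≤ ρ) :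
    (cosh ρ)⁻¹ * log (ρ / a) ≤ ∫ u in a..ρ, cosh a / √(cosh u ^ 2 - cosh a ^ 2) := by
  rw [← integral_inv_of_pos ha (ha.trans_le haρ), ← intervalIntegral.integral_const_mul]
  refine integral_mono_on_of_le_Ioo haρ ?_ ?_ fun u ⟨hau, huρ⟩ ↦ ?_
  · refine (intervalIntegrable_inv (fun u hu ↦ ?_) continuousOn_id).const_mul _
    rw [uIcc_of_le haρ] at hu
    exact (ha.trans_le hu.1).ne'
  · simpa only [div_eq_mul_inv] using
      (intervalIntegrable_inv_sqrt_cosh_sq_sub_cosh_sq ha haρ).const_mul (cosh a)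
  · have hu : 0 < u := ha.trans hau
    have hradicand : 0 < √(cosh u ^ 2 - cosh a ^ 2) := sqrt_pos.2 <|
      (mul_pos (mul_pos two_pos (sinh_pos_iff.2 ha)) (sub_pos.2 hau)).trans_le
        (two_mul_sinh_mul_sub_le_cosh_sq_sub_cosh_sq ha.le hau.le)
    calc (cosh ρ)⁻¹ * u⁻¹ = (u * cosh ρ)⁻¹ := by rw [mul_inv, mul_comm]
      _ ≤ (u * cosh u)⁻¹ := by
        gcongr
        exact cosh_le_cosh.2 (by rw [abs_of_pos hu, abs_of_pos (hu.trans huρ)]; exact huρ.le)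
      _ ≤ (√(cosh u ^ 2 - cosh a ^ 2))⁻¹ :=
        inv_anti₀ hradicand (sqrt_cosh_sq_sub_cosh_sq_le hu.le)
      _ ≤ cosh a / √(cosh u ^ 2 - cosh a ^ 2) := by
        rw [div_eq_mul_inv]
        exact le_mul_of_one_le_left (by positivity) (one_le_cosh a)

/-- For fixed `ρ > 0`, `λ_d(ρ) = ∫_{arccosh d}^{ρ} d/√(cosh²u − d²) du → +∞`
as `d → 1⁺` (through `d` with `1 < d < cosh ρ`). -/
theorem stmt_4 (ρ : ℝ) (hρ : 0 < ρ) :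
    Tendsto (fun d : ℝ => ∫ u in (arccosh d)..ρ, d / Real.sqrt (Real.cosh u ^ 2 - d ^ 2))
      (𝓝[Set.Ioo 1 (Real.cosh ρ)] (1 : ℝ)) atTop := by
  have hratio : Tendsto (fun d ↦ ρ / arccosh d) (𝓝[Ioo 1 (cosh ρ)] 1) atTop := by
    simpa only [div_eq_mul_inv, Pi.inv_apply] using ((tendsto_arccosh_nhdsGT_one.mono_left
      (nhdsWithin_mono _ Ioo_subset_Ioi_self)).inv_tendsto_nhdsGT_zero.const_mul_atTop hρ)
  refine tendsto_atTop_mono' _ ?_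
    ((tendsto_log_atTop.comp hratio).const_mul_atTop (inv_pos.2 (cosh_pos ρ)))
  filter_upwards [self_mem_nhdsWithin] with d ⟨hd1, hdρ⟩
  have hcosh : cosh (arccosh d) = d := cosh_arcosh hd1.le
  have hlt : arccosh d < ρ := by
    rw [← arcosh_cosh hρ.le]
    exact (arcosh_lt_arcosh (by linarith) (cosh_pos ρ)).2 hdρ
  have hbound := inv_cosh_mul_log_le_integral (a := arccosh d) (arcosh_pos hd1) hlt.le
  rwa [hcosh] at hbound
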